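/- With A₀ = B₀ = the rotation matrix by angle, respectively, t and u = π/4 − t in the plane, D(w) = diag(1, w), and H(z) determined by (H₀(z), H₁(z))^T being the first column of (1/√2) A₀ D(z²) B₀ ((1,1),(z, −z))-type product, the resulting H₀(z) = (1/√2)(cos t cos u + (cos t sin u) z − (sin t sin u) z² + (sin t cos u) z³) satisfies H₀(1) = 1 and |H₀(z)|² + |H₀(−z)|² = 1 for all |z| = 1. -/

import Mathlib

/-- For `u = π/4 − t`, the frequency function
`H₀(z) = (1/√2)(cos t cos u + (cos t sin u) z − (sin t sin u) z² + (sin t cos u) z³)`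
satisfies `H₀(1) = 1` and the quadrature-mirror-filter identity
`|H₀(z)|² + |H₀(−z)|² = 1` for all `|z| = 1`. -/
theorem H0_qmf_identity (t u : ℝ) (hu : u = Real.pi / 4 - t)
    (H₀ : ℂ → ℂ)
    (hH₀ : ∀ z : ℂ, H₀ z = (1 / Real.sqrt 2 : ℂ) *
      ((Real.cos t * Real.cos u : ℝ) + (Real.cos t * Real.sin u : ℝ) * z
        - (Real.sin t * Real.sin u : ℝ) * z ^ 2
        + (Real.sin t * Real.cos u : ℝ) * z ^ 3)) :
    H₀ 1 = 1 ∧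
      ∀ z : ℂ, ‖z‖ = 1 →
        ‖H₀ z‖ ^ 2 + ‖H₀ (-z)‖ ^ 2 = 1 := by
  have hcu : Real.cos u = Real.sqrt 2 / 2 * (Real.cos t + Real.sin t) := by
    rw [hu, Real.cos_sub, Real.cos_pi_div_four, Real.sin_pi_div_four]; ring
  have hsu : Real.sin u = Real.sqrt 2 / 2 * (Real.cos t - Real.sin t) := by
    rw [hu, Real.sin_sub, Real.cos_pi_div_four, Real.sin_pi_div_four]; ring
  set c : ℂ := (Real.cos t : ℂ) with hc
  set s : ℂ := (Real.sin t : ℂ) with hs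
  have hcs : c ^ 2 + s ^ 2 = 1 := by
    rw [hc, hs]; norm_cast; exact Real.cos_sq_add_sin_sq t
  have hr2 : ((Real.sqrt 2 : ℝ) : ℂ) ^ 2 = 2 := by
    norm_cast; exact Real.sq_sqrt (by norm_num)
  have hr0 : ((Real.sqrt 2 : ℝ) : ℂ) ≠ 0 := by
    intro h
    have : ((Real.sqrt 2 : ℝ) : ℂ) ^ 2 = 0 := by rw [h]; ring
    rw [hr2] at this; norm_num at this
  have hH : ∀ z : ℂ, H₀ z = (1 / 2) *
      (c * (c + s) + c * (c - s) * z - s * (c - s) * z ^ 2 + s * (c + s) * z ^ 3) := by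
    intro z
    rw [hH₀ z, hcu, hsu]
    simp only [Complex.ofReal_mul, Complex.ofReal_add, Complex.ofReal_sub,
      Complex.ofReal_div, Complex.ofReal_ofNat, ← hc, ← hs]
    field_simp
  constructor
  · rw [hH 1]
    linear_combination hcs
  · intro z hz
    set w : ℂ := (starRingEnd ℂ) z with hw
    have hzw : z * w = 1 := by
      rw [hw, Complex.mul_conj, Complex.normSq_eq_norm_sq, hz]
      norm_num
    have hconj : (starRingEnd ℂ) (H₀ z) = (1 / 2) *
        (c * (c + s) + c * (c - s) * w - s * (c - s) * w ^ 2 + s * (c + s) * w ^ 3) := by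
      rw [hH z, hw, hc, hs]
      simp only [map_mul, map_add, map_sub, map_pow, Complex.conj_ofReal, map_one, map_div₀,
        map_ofNat]
    have hconjn : (starRingEnd ℂ) (H₀ (-z)) = (1 / 2) *
        (c * (c + s) + c * (c - s) * (-w) - s * (c - s) * (-w) ^ 2 + s * (c + s) * (-w) ^ 3) := by
      rw [hH (-z), hc, hs]
      simp only [map_mul, map_add, map_sub, map_pow, Complex.conj_ofReal, map_one, map_div₀,
        map_ofNat, map_neg, hw]
    have key : H₀ z * (starRingEnd ℂ) (H₀ z) + H₀ (-z) * (starRingEnd ℂ) (H₀ (-z)) = 1 := by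
      rw [hconj, hconjn, hH z, hH (-z)]
      linear_combination (s^4 + s^4*z*w + (1/2)*s^4*z^2*w^2 - (1/2)*c*s^3*w^2
        - (1/2)*c*s^3*z^2 + c*s^3*z^2*w^2 + (3/2)*c^2*s^2 + c^2*s^2*z*w
        + (1/2)*c^2*s^2*z^2*w^2 - c^3*s + (1/2)*c^3*s*w^2 + (1/2)*c^3*s*z^2
        + (1/2)*c^4) * hzw + (1 + s^2 + c^2) * hcs
    rw [Complex.sq_norm, Complex.sq_norm]
    have hfin : ((Complex.normSq (H₀ z) : ℂ)) + (Complex.normSq (H₀ (-z)) : ℂ) = 1 := by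
      rw [← Complex.mul_conj, ← Complex.mul_conj]; exact key
    exact_mod_cast hfin
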